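/- Let n be a positive integer and suppose an orientation of the n-cube has the property that every vertex has in-degree 0 or in-degree n. Then there is a fixed parity ε ∈ ZMod 2 such that every edge is oriented toward its endpoint of parity ε; in particular there are exactly two such orientations. -/

import Mathlib

/-!
Every edge has its head at a vertex of in-degree `n` and its tail at a vertex of in-degree `0`,
so the parity of the head of an edge at `v` is `parity v` if `v` has in-degree `n` and
`parity v + 1` otherwise. Since both endpoints of an edge see the same head, this quantity does
not change along edges, and the cube is connected, so it is a constant `ε`. An orientation is
determined by the parity of its heads, which leaves only the two checkerboard orientations.
-/

/-- Flip coordinate `i` of a binary `n`-tuple. -/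
def flipBit {n : ℕ} (v : Fin n → ZMod 2) (i : Fin n) : Fin n → ZMod 2 :=
  Function.update v i (v i + 1)

/-- An orientation of the `n`-cube: to each edge (a pair of vertices differing in
exactly one coordinate) we assign a head, one of its two endpoints.  The edge at
vertex `v` in direction `i` joins `v` and `flipBit v i`; `head v i` is the
assigned head of that edge, which must be one of the endpoints and must not
depend on from which endpoint the edge is viewed. -/
structure CubeOrientation (n : ℕ) where
  head : (Fin n → ZMod 2) → Fin n → (Fin n → ZMod 2)
  head_mem : ∀ v i, head v i = v ∨ head v i = flipBit v i
  compatible : ∀ v i, head (flipBit v i) i = head v i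

/-- The in-degree of a vertex `v`: the number of edges incident to `v`
whose head is `v`. -/
def CubeOrientation.inDeg {n : ℕ} (o : CubeOrientation n) (v : Fin n → ZMod 2) : ℕ :=
  (Finset.univ.filter fun i : Fin n => o.head v i = v).card

/-- The parity of a vertex: the sum of its coordinates modulo 2. -/
def parity {n : ℕ} (v : Fin n → ZMod 2) : ZMod 2 := ∑ i, v i

variable {n : ℕ}

theorem flipBit_eq_add_single (v : Fin n → ZMod 2) (i : Fin n) :
    flipBit v i = v + Pi.single i 1 := by
  ext j
  rcases eq_or_ne j i with rfl | hj <;> simp [flipBit, *]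

theorem flipBit_ne (v : Fin n → ZMod 2) (i : Fin n) : flipBit v i ≠ v := fun h => by
  simpa [flipBit] using congrFun h i

theorem flipBit_flipBit (v : Fin n → ZMod 2) (i : Fin n) : flipBit (flipBit v i) i = v := by
  rw [flipBit_eq_add_single, flipBit_eq_add_single, add_assoc, ← Pi.single_add,
    CharTwo.add_self_eq_zero, Pi.single_zero, add_zero]

theorem parity_flipBit (v : Fin n → ZMod 2) (i : Fin n) :
    parity (flipBit v i) = parity v + 1 := by
  simp [parity, flipBit_eq_add_single, Finset.sum_add_distrib]

theorem parity_flipBit_eq_iff (v : Fin n → ZMod 2) (i : Fin n) (ε : ZMod 2) :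
    parity (flipBit v i) = ε ↔ parity v ≠ ε := by
  rw [parity_flipBit]
  generalize parity v = p
  revert p ε
  decide

theorem eq_of_flipBit_invariant {α : Type*} {g : (Fin n → ZMod 2) → α}
    (hg : ∀ v i, g (flipBit v i) = g v) (v w : Fin n → ZMod 2) : g v = g w := by
  suffices key : ∀ u v, g (v + u) = g v by simpa using (key v 0).trans (key w 0).symm
  intro u
  induction u using Pi.single_induction with
  | zero => simp
  | add u u' hu hu' => intro v; rw [← add_assoc, hu', hu]
  | single i m =>
    intro v
    obtain rfl | rfl : m = 0 ∨ m = 1 := by revert m; decide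
    · simp
    · rw [← flipBit_eq_add_single, hg]

namespace CubeOrientation

theorem ext_head {o o' : CubeOrientation n} (h : o.head = o'.head) : o = o' := by
  cases o; cases o'; cases h; rfl

variable (o : CubeOrientation n)

theorem inDeg_eq_iff_forall_head_eq (v : Fin n → ZMod 2) :
    o.inDeg v = n ↔ ∀ i, o.head v i = v := by
  simpa [inDeg] using Finset.card_filter_eq_iff (s := Finset.univ) (p := fun i => o.head v i = v)

theorem inDeg_eq_zero_iff_forall_head_ne (v : Fin n → ZMod 2) :
    o.inDeg v = 0 ↔ ∀ i, o.head v i ≠ v := by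
  simp [inDeg]

def headParity (v : Fin n → ZMod 2) : ZMod 2 :=
  parity v + if o.inDeg v = n then 0 else 1

variable {o}

theorem parity_head_eq_headParity (h : ∀ v, o.inDeg v = 0 ∨ o.inDeg v = n)
    (v : Fin n → ZMod 2) (i : Fin n) : parity (o.head v i) = o.headParity v := by
  rcases o.head_mem v i with hv | hv
  · have hsink : o.inDeg v = n :=
      (h v).resolve_left fun h0 => (o.inDeg_eq_zero_iff_forall_head_ne v).mp h0 i hv
    simp [headParity, hv, hsink]
  · have hsource : o.inDeg v ≠ n := fun hn =>
      flipBit_ne v i (hv.symm.trans ((o.inDeg_eq_iff_forall_head_eq v).mp hn i))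
    simp [headParity, hv, hsource, parity_flipBit]

theorem exists_parity_head_eq (h : ∀ v, o.inDeg v = 0 ∨ o.inDeg v = n) :
    ∃ ε : ZMod 2, ∀ v i, parity (o.head v i) = ε := by
  have hflip (v : Fin n → ZMod 2) (i : Fin n) : o.headParity (flipBit v i) = o.headParity v := by
    rw [← parity_head_eq_headParity h _ i, o.compatible, parity_head_eq_headParity h]
  exact ⟨o.headParity 0, fun v i =>
    (parity_head_eq_headParity h v i).trans (eq_of_flipBit_invariant hflip v 0)⟩

theorem head_eq_ite_of_parity_head {ε : ZMod 2} (hε : ∀ v i, parity (o.head v i) = ε)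
    (v : Fin n → ZMod 2) (i : Fin n) :
    o.head v i = if parity v = ε then v else flipBit v i := by
  split_ifs with hv
  · exact (o.head_mem v i).resolve_right fun hflip =>
      (parity_flipBit_eq_iff v i ε).mp (hflip ▸ hε v i) hv
  · exact (o.head_mem v i).resolve_left fun hself => hv (by rw [← hself, hε])

theorem inDeg_eq_zero_or_eq_of_parity_head {ε : ZMod 2} (hε : ∀ v i, parity (o.head v i) = ε)
    (v : Fin n → ZMod 2) : o.inDeg v = 0 ∨ o.inDeg v = n := by
  by_cases hv : parity v = ε
  · exact Or.inr ((o.inDeg_eq_iff_forall_head_eq v).mpr fun i => by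
      rw [head_eq_ite_of_parity_head hε, if_pos hv])
  · exact Or.inl ((o.inDeg_eq_zero_iff_forall_head_ne v).mpr fun i hself => hv (by
      rw [← hself, hε]))

end CubeOrientation

def checkerboard (n : ℕ) (ε : ZMod 2) : CubeOrientation n where
  head v i := if parity v = ε then v else flipBit v i
  head_mem v i := by split_ifs <;> simp
  compatible v i := by
    by_cases hv : parity v = ε <;> simp [parity_flipBit_eq_iff, hv, flipBit_flipBit]

theorem parity_head_checkerboard (ε : ZMod 2) (v : Fin n → ZMod 2) (i : Fin n) :
    parity ((checkerboard n ε).head v i) = ε := by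
  by_cases hv : parity v = ε <;> simp [checkerboard, parity_flipBit_eq_iff, hv]

theorem checkerboard_injective (hn : 0 < n) : Function.Injective (checkerboard n) :=
  fun ε ε' h => by
    rw [← parity_head_checkerboard ε 0 ⟨0, hn⟩, h, parity_head_checkerboard]

theorem CubeOrientation.inDeg_eq_zero_or_eq_iff_exists_checkerboard (o : CubeOrientation n) :
    (∀ v, o.inDeg v = 0 ∨ o.inDeg v = n) ↔ ∃ ε, o = checkerboard n ε := by
  constructor
  · intro h
    obtain ⟨ε, hε⟩ := o.exists_parity_head_eq h
    exact ⟨ε, CubeOrientation.ext_head (funext₂ (o.head_eq_ite_of_parity_head hε))⟩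
  · rintro ⟨ε, rfl⟩
    exact CubeOrientation.inDeg_eq_zero_or_eq_of_parity_head (parity_head_checkerboard ε)

theorem checkerboard_essentially_unique (n : ℕ) (hn : 0 < n) (o : CubeOrientation n)
    (h : ∀ v, o.inDeg v = 0 ∨ o.inDeg v = n) :
    (∃ ε : ZMod 2, ∀ v i, parity (o.head v i) = ε) ∧
      ∃ o₁ o₂ : CubeOrientation n, o₁ ≠ o₂ ∧
        ∀ o' : CubeOrientation n,
          (∀ v, o'.inDeg v = 0 ∨ o'.inDeg v = n) ↔ (o' = o₁ ∨ o' = o₂) := by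
  refine ⟨o.exists_parity_head_eq h, checkerboard n 0, checkerboard n 1,
    (checkerboard_injective hn).ne zero_ne_one, fun o' => ?_⟩
  rw [o'.inDeg_eq_zero_or_eq_iff_exists_checkerboard]
  constructor
  · rintro ⟨ε, rfl⟩
    obtain rfl | rfl : ε = 0 ∨ ε = 1 := by revert ε; decide
    · exact Or.inl rfl
    · exact Or.inr rfl
  · rintro (rfl | rfl) <;> exact ⟨_, rfl⟩
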